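/- arXiv:2010.03700 — 3 statements merged into one kernel-verified Lean document; each statement's English description precedes it below -/
import Mathlib

section
/- Let f : [a,b] → ℝ be twice continuously differentiable. Then n² · ( ∫_a^b f(x) dx − Σ_{i=1}^n (b−a)/n · f( a + (i − 1/2)(b−a)/n ) ) converges, as n → ∞, to (b−a)²/24 · (f'(b) − f'(a)). That is, the midpoint-rule error with n equal subintervals is asymptotically ((b−a)²/(24 n²))(f'(b) − f'(a)). -/
open Set Filter

section MidpointAux
open Set Filter intervalIntegral MeasureTheory


lemma ftc_aux {g g' : ℝ → ℝ} {p q : ℝ} (hpq : p ≤ q) (hc : ContinuousOn g (Icc p q))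
    (hd : ∀ t ∈ Ioo p q, HasDerivAt g (g' t) t)
    (hi : IntervalIntegrable g' volume p q) :
    ∫ t in p..q, g' t = g q - g p :=
  integral_eq_sub_of_hasDeriv_right_of_le hpq hc
    (fun t ht => ((hd t ht).hasDerivWithinAt)) hi

lemma kernel_left (p m : ℝ) : ∫ t in p..m, (t - p)^2/2 = (m - p)^3/6 := by
  have hd : ∀ t ∈ uIcc p m, HasDerivAt (fun t => (t - p)^3/6) ((t - p)^2/2) t := by
    intro t _
    have := (((hasDerivAt_id t).sub_const p).pow 3).div_const 6
    refine this.congr_deriv ?_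
    simp only [id_eq]
    push_cast
    ring
  have hi : IntervalIntegrable (fun t => (t - p)^2/2) volume p m :=
    (Continuous.intervalIntegrable (by continuity) p m)
  rw [integral_eq_sub_of_hasDerivAt hd hi]
  ring

lemma kernel_right (m q : ℝ) : ∫ t in m..q, (q - t)^2/2 = (q - m)^3/6 := by
  have hd : ∀ t ∈ uIcc m q, HasDerivAt (fun t => -((q - t)^3/6)) ((q - t)^2/2) t := by
    intro t _
    have := ((((hasDerivAt_id t).const_sub q).pow 3).div_const 6).neg
    refine this.congr_deriv ?_
    simp only [id_eq]
    push_cast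
    ring
  have hi : IntervalIntegrable (fun t => (q - t)^2/2) volume m q :=
    (Continuous.intervalIntegrable (by continuity) m q)
  rw [integral_eq_sub_of_hasDerivAt hd hi]
  ring

lemma taylor_left {a b : ℝ} {f f₁ f₂ : ℝ → ℝ} {p m : ℝ}
    (hap : a ≤ p) (hpm : p ≤ m) (hmb : m ≤ b)
    (hfc : ContinuousOn f (Icc a b)) (hf1c : ContinuousOn f₁ (Icc a b))
    (hf2c : ContinuousOn f₂ (Icc a b))
    (hd1 : ∀ t ∈ Ioo a b, HasDerivAt f (f₁ t) t)
    (hd2 : ∀ t ∈ Ioo a b, HasDerivAt f₁ (f₂ t) t) :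
    ∫ t in p..m, (t - p)^2/2 * f₂ t
      = (m - p)^2/2 * f₁ m - (m - p) * f m + ∫ t in p..m, f t := by
  have hsub : Icc p m ⊆ Icc a b := Icc_subset_Icc hap hmb
  have huicc : uIcc p m = Icc p m := uIcc_of_le hpm
  have hif : IntervalIntegrable f volume p m := by
    apply ContinuousOn.intervalIntegrable; rw [huicc]; exact hfc.mono hsub
  have hik : IntervalIntegrable (fun t => (t - p)^2/2 * f₂ t) volume p m := by
    apply ContinuousOn.intervalIntegrable; rw [huicc]
    exact (Continuous.continuousOn (by continuity)).mul (hf2c.mono hsub)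
  have hisub : IntervalIntegrable (fun t => (t - p)^2/2 * f₂ t - f t) volume p m :=
    hik.sub hif
  have key : ∫ t in p..m, ((t - p)^2/2 * f₂ t - f t)
      = ((m - p)^2/2 * f₁ m - (m - p) * f m)
        - ((p - p)^2/2 * f₁ p - (p - p) * f p) := by
    apply ftc_aux hpm
    · apply ContinuousOn.sub
      · exact (Continuous.continuousOn (by continuity)).mul (hf1c.mono hsub)
      · exact (Continuous.continuousOn (by continuity)).mul (hfc.mono hsub)
    · intro t ht
      have htab : t ∈ Ioo a b := ⟨lt_of_le_of_lt hap ht.1, lt_of_lt_of_le ht.2 hmb⟩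
      have h1 : HasDerivAt (fun t => (t - p)^2/2) (t - p) t := by
        have := (((hasDerivAt_id t).sub_const p).pow 2).div_const 2
        refine this.congr_deriv ?_
        simp only [id_eq]; push_cast; ring
      have h2 : HasDerivAt (fun t => (t - p)) 1 t := (hasDerivAt_id t).sub_const p
      have hh := (h1.mul (hd2 t htab)).sub (h2.mul (hd1 t htab))
      refine hh.congr_deriv ?_
      ring
    · exact hisub
  have hsplit : ∫ t in p..m, ((t - p)^2/2 * f₂ t - f t)
      = (∫ t in p..m, (t - p)^2/2 * f₂ t) - ∫ t in p..m, f t :=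
    integral_sub hik hif
  rw [hsplit] at key
  have : (p - p) = 0 := by ring
  rw [this] at key
  linarith [key]

lemma taylor_right {a b : ℝ} {f f₁ f₂ : ℝ → ℝ} {m q : ℝ}
    (ham : a ≤ m) (hmq : m ≤ q) (hqb : q ≤ b)
    (hfc : ContinuousOn f (Icc a b)) (hf1c : ContinuousOn f₁ (Icc a b))
    (hf2c : ContinuousOn f₂ (Icc a b))
    (hd1 : ∀ t ∈ Ioo a b, HasDerivAt f (f₁ t) t)
    (hd2 : ∀ t ∈ Ioo a b, HasDerivAt f₁ (f₂ t) t) :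
    ∫ t in m..q, (q - t)^2/2 * f₂ t
      = -((q - m)^2/2 * f₁ m) - (q - m) * f m + ∫ t in m..q, f t := by
  have hsub : Icc m q ⊆ Icc a b := Icc_subset_Icc ham hqb
  have huicc : uIcc m q = Icc m q := uIcc_of_le hmq
  have hif : IntervalIntegrable f volume m q := by
    apply ContinuousOn.intervalIntegrable; rw [huicc]; exact hfc.mono hsub
  have hik : IntervalIntegrable (fun t => (q - t)^2/2 * f₂ t) volume m q := by
    apply ContinuousOn.intervalIntegrable; rw [huicc]
    exact (Continuous.continuousOn (by continuity)).mul (hf2c.mono hsub)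
  have hisub : IntervalIntegrable (fun t => (q - t)^2/2 * f₂ t - f t) volume m q :=
    hik.sub hif
  have key : ∫ t in m..q, ((q - t)^2/2 * f₂ t - f t)
      = ((q - q)^2/2 * f₁ q + (q - q) * f q)
        - ((q - m)^2/2 * f₁ m + (q - m) * f m) := by
    apply ftc_aux (g := fun t => (q - t)^2/2 * f₁ t + (q - t) * f t) hmq
    · apply ContinuousOn.add
      · exact (Continuous.continuousOn (by continuity)).mul (hf1c.mono hsub)
      · exact (Continuous.continuousOn (by continuity)).mul (hfc.mono hsub)
    · intro t ht
      have htab : t ∈ Ioo a b := ⟨lt_of_le_of_lt ham ht.1, lt_of_lt_of_le ht.2 hqb⟩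
      have h1 : HasDerivAt (fun t => (q - t)^2/2) (-(q - t)) t := by
        have := (((hasDerivAt_id t).const_sub q).pow 2).div_const 2
        refine this.congr_deriv ?_
        simp only [id_eq]; push_cast; ring
      have h2 : HasDerivAt (fun t => (q - t)) (-1) t := by
        have := (hasDerivAt_id t).const_sub q
        exact this
      have hh := (h1.mul (hd2 t htab)).add (h2.mul (hd1 t htab))
      refine hh.congr_deriv ?_
      ring
    · exact hisub
  have hsplit : ∫ t in m..q, ((q - t)^2/2 * f₂ t - f t)
      = (∫ t in m..q, (q - t)^2/2 * f₂ t) - ∫ t in m..q, f t :=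
    integral_sub hik hif
  rw [hsplit] at key
  have : (q - q) = 0 := by ring
  rw [this] at key
  linarith [key]

lemma abs_half_sub_le {y X c C : ℝ} (hy : 0 ≤ y) (hX : y ≤ X) (hc : 0 ≤ c)
    (hC : X/2 + c ≤ C) : |y/2 - c| ≤ C := by
  rw [abs_sub_le_iff]; constructor <;> linarith

set_option maxHeartbeats 1000000 in
lemma interval_est {a b : ℝ} {f f₁ f₂ : ℝ → ℝ} {p q c C ν ε : ℝ}
    (hap : a ≤ p) (hpq : p ≤ q) (hqb : q ≤ b)
    (hfc : ContinuousOn f (Icc a b)) (hf1c : ContinuousOn f₁ (Icc a b))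
    (hf2c : ContinuousOn f₂ (Icc a b))
    (hd1 : ∀ t ∈ Ioo a b, HasDerivAt f (f₁ t) t)
    (hd2 : ∀ t ∈ Ioo a b, HasDerivAt f₁ (f₂ t) t)
    (hzero : ν^2 * (q - p)^3 / 24 = c * (q - p))
    (hc0 : 0 ≤ c)
    (hC : ν^2 * ((q - p)/2)^2/2 + c ≤ C)
    (hε0 : 0 ≤ ε)
    (hε : ∀ t ∈ Icc p q, |f₂ t - f₂ ((p + q)/2)| ≤ ε) :
    |ν^2 * ((∫ t in p..q, f t) - (q - p) * f ((p + q)/2)) - c * ∫ t in p..q, f₂ t|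
      ≤ C * ε * (q - p) := by
  set m : ℝ := (p + q)/2 with hm
  have hpm : p ≤ m := by rw [hm]; linarith
  have hmq : m ≤ q := by rw [hm]; linarith
  have hmb : m ≤ b := le_trans hmq hqb
  have ham : a ≤ m := le_trans hap hpm
  have hmp : m - p = (q - p)/2 := by rw [hm]; ring
  have hqm : q - m = (q - p)/2 := by rw [hm]; ring
  have hsubL : Icc p m ⊆ Icc a b := Icc_subset_Icc hap hmb
  have hsubR : Icc m q ⊆ Icc a b := Icc_subset_Icc ham hqb
  have huL : uIcc p m = Icc p m := uIcc_of_le hpm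
  have huR : uIcc m q = Icc m q := uIcc_of_le hmq
  -- integrability
  have hifL : IntervalIntegrable f volume p m := by
    apply ContinuousOn.intervalIntegrable; rw [huL]; exact hfc.mono hsubL
  have hifR : IntervalIntegrable f volume m q := by
    apply ContinuousOn.intervalIntegrable; rw [huR]; exact hfc.mono hsubR
  have hif2L : IntervalIntegrable f₂ volume p m := by
    apply ContinuousOn.intervalIntegrable; rw [huL]; exact hf2c.mono hsubL
  have hif2R : IntervalIntegrable f₂ volume m q := by
    apply ContinuousOn.intervalIntegrable; rw [huR]; exact hf2c.mono hsubR
  have hikL : IntervalIntegrable (fun t => (t - p)^2/2 * f₂ t) volume p m := by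
    apply ContinuousOn.intervalIntegrable; rw [huL]
    exact (Continuous.continuousOn (by continuity)).mul (hf2c.mono hsubL)
  have hikR : IntervalIntegrable (fun t => (q - t)^2/2 * f₂ t) volume m q := by
    apply ContinuousOn.intervalIntegrable; rw [huR]
    exact (Continuous.continuousOn (by continuity)).mul (hf2c.mono hsubR)
  have hkL : IntervalIntegrable (fun t => (t - p)^2/2) volume p m :=
    Continuous.intervalIntegrable (by continuity) p m
  have hkR : IntervalIntegrable (fun t => (q - t)^2/2) volume m q :=
    Continuous.intervalIntegrable (by continuity) m q
  -- Taylor identities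
  have hA := taylor_left hap hpm hmb hfc hf1c hf2c hd1 hd2
  have hB := taylor_right ham hmq hqb hfc hf1c hf2c hd1 hd2
  have hEf : (∫ t in p..m, f t) + ∫ t in m..q, f t = ∫ t in p..q, f t :=
    integral_add_adjacent_intervals hifL hifR
  have hEf2 : (∫ t in p..m, f₂ t) + ∫ t in m..q, f₂ t = ∫ t in p..q, f₂ t :=
    integral_add_adjacent_intervals hif2L hif2R
  have hE : (∫ t in p..q, f t) - (q - p) * f m
      = (∫ t in p..m, (t - p)^2/2 * f₂ t) + ∫ t in m..q, (q - t)^2/2 * f₂ t := by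
    rw [hA, hB, hmp, hqm, ← hEf]; ring
  -- D₁ computation
  have hu1 : IntervalIntegrable (fun t => ν^2 * ((t - p)^2/2 * f₂ t) - c * f₂ t) volume p m :=
    (hikL.const_mul _).sub (hif2L.const_mul _)
  have hv1 : IntervalIntegrable (fun t => (ν^2 * f₂ m) * ((t - p)^2/2) - c * f₂ m) volume p m :=
    (hkL.const_mul _).sub intervalIntegrable_const
  have hD1 : (∫ t in p..m, (ν^2 * ((t - p)^2/2) - c) * (f₂ t - f₂ m))
      = (ν^2 * (∫ t in p..m, (t - p)^2/2 * f₂ t) - c * (∫ t in p..m, f₂ t))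
        - ((ν^2 * f₂ m) * ((m - p)^3/6) - (m - p) * (c * f₂ m)) := by
    rw [show (fun t => (ν^2 * ((t - p)^2/2) - c) * (f₂ t - f₂ m))
        = fun t => (ν^2 * ((t - p)^2/2 * f₂ t) - c * f₂ t)
            - ((ν^2 * f₂ m) * ((t - p)^2/2) - c * f₂ m) from funext fun t => by ring]
    rw [integral_sub hu1 hv1, integral_sub (hikL.const_mul _) (hif2L.const_mul _),
      integral_sub (hkL.const_mul _) intervalIntegrable_const,
      intervalIntegral.integral_const_mul, intervalIntegral.integral_const_mul, intervalIntegral.integral_const_mul, kernel_left,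
      intervalIntegral.integral_const, smul_eq_mul]
  have hu2 : IntervalIntegrable (fun t => ν^2 * ((q - t)^2/2 * f₂ t) - c * f₂ t) volume m q :=
    (hikR.const_mul _).sub (hif2R.const_mul _)
  have hv2 : IntervalIntegrable (fun t => (ν^2 * f₂ m) * ((q - t)^2/2) - c * f₂ m) volume m q :=
    (hkR.const_mul _).sub intervalIntegrable_const
  have hD2 : (∫ t in m..q, (ν^2 * ((q - t)^2/2) - c) * (f₂ t - f₂ m))
      = (ν^2 * (∫ t in m..q, (q - t)^2/2 * f₂ t) - c * (∫ t in m..q, f₂ t))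
        - ((ν^2 * f₂ m) * ((q - m)^3/6) - (q - m) * (c * f₂ m)) := by
    rw [show (fun t => (ν^2 * ((q - t)^2/2) - c) * (f₂ t - f₂ m))
        = fun t => (ν^2 * ((q - t)^2/2 * f₂ t) - c * f₂ t)
            - ((ν^2 * f₂ m) * ((q - t)^2/2) - c * f₂ m) from funext fun t => by ring]
    rw [integral_sub hu2 hv2, integral_sub (hikR.const_mul _) (hif2R.const_mul _),
      integral_sub (hkR.const_mul _) intervalIntegrable_const,
      intervalIntegral.integral_const_mul, intervalIntegral.integral_const_mul, intervalIntegral.integral_const_mul, kernel_right,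
      intervalIntegral.integral_const, smul_eq_mul]
  -- total identity
  have hT : ν^2 * ((∫ t in p..q, f t) - (q - p) * f m) - c * ∫ t in p..q, f₂ t
      = (∫ t in p..m, (ν^2 * ((t - p)^2/2) - c) * (f₂ t - f₂ m))
        + ∫ t in m..q, (ν^2 * ((q - t)^2/2) - c) * (f₂ t - f₂ m) := by
    rw [hE, hD1, hD2, ← hEf2, hmp, hqm]
    linear_combination (f₂ m) * hzero
  -- bounds
  have hν2 : (0:ℝ) ≤ ν^2 := sq_nonneg ν
  have hC0 : (0:ℝ) ≤ C := le_trans (by positivity) hC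
  have hbd1 : |∫ t in p..m, (ν^2 * ((t - p)^2/2) - c) * (f₂ t - f₂ m)| ≤ C * ε * ((q - p)/2) := by
    have hptw : ∀ t ∈ Set.uIoc p m, ‖(ν^2 * ((t - p)^2/2) - c) * (f₂ t - f₂ m)‖ ≤ C * ε := by
      intro t ht
      rw [uIoc_of_le hpm] at ht
      have ht1 : p ≤ t := le_of_lt ht.1
      have htq : t ≤ q := le_trans ht.2 hmq
      have hk_bd : |ν^2 * ((t - p)^2/2) - c| ≤ C := by
        have h2 : (t - p)^2 ≤ ((q - p)/2)^2 := by
          apply sq_le_sq'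
          · nlinarith [hmp, ht.2, ht.1]
          · linarith [hmp, ht.2]
        have h3 : ν^2 * (t - p)^2 ≤ ν^2 * ((q - p)/2)^2 :=
          mul_le_mul_of_nonneg_left h2 hν2
        have he : ν^2 * ((t - p)^2/2) - c = (ν^2 * (t - p)^2)/2 - c := by ring
        rw [he]
        exact abs_half_sub_le (by positivity) h3 hc0 (by linarith)
      have hg_bd : |f₂ t - f₂ m| ≤ ε := hε t ⟨ht1, htq⟩
      rw [Real.norm_eq_abs, abs_mul]
      exact mul_le_mul hk_bd hg_bd (abs_nonneg _) hC0
    have hni := intervalIntegral.norm_integral_le_of_norm_le_const hptw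
    rw [Real.norm_eq_abs] at hni
    have habs : |m - p| = (q - p)/2 := by rw [abs_of_nonneg (by linarith), hmp]
    rw [habs] at hni
    exact hni
  have hbd2 : |∫ t in m..q, (ν^2 * ((q - t)^2/2) - c) * (f₂ t - f₂ m)| ≤ C * ε * ((q - p)/2) := by
    have hptw : ∀ t ∈ Set.uIoc m q, ‖(ν^2 * ((q - t)^2/2) - c) * (f₂ t - f₂ m)‖ ≤ C * ε := by
      intro t ht
      rw [uIoc_of_le hmq] at ht
      have hpt : p ≤ t := le_trans hpm (le_of_lt ht.1)
      have hk_bd : |ν^2 * ((q - t)^2/2) - c| ≤ C := by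
        have h2 : (q - t)^2 ≤ ((q - p)/2)^2 := by
          apply sq_le_sq'
          · nlinarith [hqm, ht.1, ht.2]
          · linarith [hqm, ht.1]
        have h3 : ν^2 * (q - t)^2 ≤ ν^2 * ((q - p)/2)^2 :=
          mul_le_mul_of_nonneg_left h2 hν2
        have he : ν^2 * ((q - t)^2/2) - c = (ν^2 * (q - t)^2)/2 - c := by ring
        rw [he]
        exact abs_half_sub_le (by positivity) h3 hc0 (by linarith)
      have hg_bd : |f₂ t - f₂ m| ≤ ε := hε t ⟨hpt, ht.2⟩
      rw [Real.norm_eq_abs, abs_mul]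
      exact mul_le_mul hk_bd hg_bd (abs_nonneg _) hC0
    have hni := intervalIntegral.norm_integral_le_of_norm_le_const hptw
    rw [Real.norm_eq_abs] at hni
    have habs : |q - m| = (q - p)/2 := by rw [abs_of_nonneg (by linarith), hqm]
    rw [habs] at hni
    exact hni
  rw [hT]
  calc |(∫ t in p..m, (ν^2 * ((t - p)^2/2) - c) * (f₂ t - f₂ m))
        + ∫ t in m..q, (ν^2 * ((q - t)^2/2) - c) * (f₂ t - f₂ m)|
      ≤ _ + _ := abs_add_le _ _
    _ ≤ C * ε * ((q - p)/2) + C * ε * ((q - p)/2) := add_le_add hbd1 hbd2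
    _ = C * ε * (q - p) := by ring

set_option maxHeartbeats 1000000 in
/-- Asymptotics of the midpoint-rule error: for `f` twice continuously differentiable
on `[a,b]`, `n² · (∫_a^b f − Σ_{i=1}^n (b−a)/n · f(a + (i−1/2)(b−a)/n))` converges to
`(b−a)²/24 · (f'(b) − f'(a))`. -/
theorem midpoint_rule_error_asymptotics (a b : ℝ) (hab : a < b) (f : ℝ → ℝ)
    (hf : ContDiffOn ℝ 2 f (Set.Icc a b)) :
    Tendsto (fun n : ℕ =>
        (n : ℝ) ^ 2 *
          ((∫ x in a..b, f x) -
            ∑ i ∈ Finset.range n, ((b - a) / n) * f (a + ((i : ℝ) + 1 / 2) * (b - a) / n)))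
      atTop
      (nhds ((b - a) ^ 2 / 24 *
        (derivWithin f (Set.Icc a b) b - derivWithin f (Set.Icc a b) a))) := by
  have hUD := uniqueDiffOn_Icc hab
  set f₁ := derivWithin f (Set.Icc a b) with hf1def
  set f₂ := derivWithin f₁ (Set.Icc a b) with hf2def
  have hfc : ContinuousOn f (Icc a b) := hf.continuousOn
  have hf1cd : ContDiffOn ℝ 1 f₁ (Icc a b) := hf.derivWithin (m := 1) hUD (by norm_num)
  have hf1c : ContinuousOn f₁ (Icc a b) := hf1cd.continuousOn
  have hf2c : ContinuousOn f₂ (Icc a b) :=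
    (hf1cd.derivWithin (m := 0) hUD (by norm_num)).continuousOn
  have hd1 : ∀ t ∈ Ioo a b, HasDerivAt f (f₁ t) t := by
    intro t ht
    exact ((hf.differentiableOn two_ne_zero t
      (Ioo_subset_Icc_self ht)).hasDerivWithinAt).hasDerivAt (Icc_mem_nhds ht.1 ht.2)
  have hd2 : ∀ t ∈ Ioo a b, HasDerivAt f₁ (f₂ t) t := by
    intro t ht
    exact ((hf1cd.differentiableOn one_ne_zero t
      (Ioo_subset_Icc_self ht)).hasDerivWithinAt).hasDerivAt (Icc_mem_nhds ht.1 ht.2)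
  have hif2 : IntervalIntegrable f₂ volume a b := by
    apply ContinuousOn.intervalIntegrable; rw [uIcc_of_le hab.le]; exact hf2c
  have hFTC : ∫ t in a..b, f₂ t = f₁ b - f₁ a := ftc_aux hab.le hf1c hd2 hif2
  have hba : (0:ℝ) < b - a := by linarith
  rw [Metric.tendsto_atTop]
  intro ε hε
  have hCba : (0:ℝ) < (b - a)^2/6 * (b - a) + 1 := by positivity
  set ε' : ℝ := ε / ((b - a)^2/6 * (b - a) + 1) with hε'def
  have hε'0 : 0 < ε' := by positivity
  obtain ⟨δ, hδ0, hδ⟩ := Metric.uniformContinuousOn_iff.1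
    (isCompact_Icc.uniformContinuousOn_of_continuous hf2c) ε' hε'0
  obtain ⟨N₀, hN₀⟩ := exists_nat_gt ((b - a)/δ)
  refine ⟨max N₀ 1, fun n hn => ?_⟩
  have hn1 : 1 ≤ n := le_trans (le_max_right _ _) hn
  have hnN₀ : N₀ ≤ n := le_trans (le_max_left _ _) hn
  have hn0 : (0:ℝ) < n := by exact_mod_cast Nat.lt_of_lt_of_le Nat.zero_lt_one hn1
  have hne : (n:ℝ) ≠ 0 := ne_of_gt hn0
  have hh0 : (0:ℝ) < (b - a)/n := by positivity
  have hhδ : (b - a)/n < δ := by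
    rw [div_lt_iff₀ hn0]
    have h1 : (b - a)/δ < (n:ℝ) := lt_of_lt_of_le hN₀ (by exact_mod_cast hnN₀)
    rw [div_lt_iff₀ hδ0] at h1
    linarith
  obtain ⟨S, hSdef⟩ : ∃ S : ℕ → ℝ, S = fun i : ℕ => a + (i : ℝ) * ((b - a)/n) := ⟨_, rfl⟩
  have hstep : ∀ i : ℕ, S (i+1) - S i = (b - a)/n := by
    intro i; simp only [hSdef]; push_cast; ring
  have hS0 : S 0 = a := by simp [hSdef]
  have hSn : S n = b := by simp only [hSdef]; field_simp; ring
  have hSmono : ∀ i j : ℕ, i ≤ j → S i ≤ S j := by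
    intro i j hij
    simp only [hSdef]
    have : (i:ℝ) * ((b - a)/n) ≤ (j:ℝ) * ((b - a)/n) :=
      mul_le_mul_of_nonneg_right (by exact_mod_cast hij) hh0.le
    linarith
  have hSa : ∀ i : ℕ, a ≤ S i := by
    intro i
    have := hSmono 0 i (Nat.zero_le i)
    rwa [hS0] at this
  have hSb : ∀ i : ℕ, i ≤ n → S i ≤ b := by
    intro i hi
    have := hSmono i n hi
    rwa [hSn] at this
  have hintf : ∀ k, k < n → IntervalIntegrable f volume (S k) (S (k+1)) := by
    intro k hk
    apply ContinuousOn.intervalIntegrable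
    rw [uIcc_of_le (hSmono k (k+1) (Nat.le_succ k))]
    exact hfc.mono (Icc_subset_Icc (hSa k) (hSb (k+1) hk))
  have hintf2 : ∀ k, k < n → IntervalIntegrable f₂ volume (S k) (S (k+1)) := by
    intro k hk
    apply ContinuousOn.intervalIntegrable
    rw [uIcc_of_le (hSmono k (k+1) (Nat.le_succ k))]
    exact hf2c.mono (Icc_subset_Icc (hSa k) (hSb (k+1) hk))
  have htel_f : ∑ i ∈ Finset.range n, ∫ t in S i..S (i+1), f t = ∫ x in a..b, f x := by
    rw [intervalIntegral.sum_integral_adjacent_intervals hintf, hS0, hSn]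
  have htel_f2 : ∑ i ∈ Finset.range n, ∫ t in S i..S (i+1), f₂ t = ∫ t in a..b, f₂ t := by
    rw [intervalIntegral.sum_integral_adjacent_intervals hintf2, hS0, hSn]
  have hmid : ∀ i : ℕ, a + ((i:ℝ) + 1/2) * (b - a)/n = (S i + S (i+1))/2 := by
    intro i; simp only [hSdef]; push_cast; field_simp; ring
  have hsum_mid : ∑ i ∈ Finset.range n, ((b - a)/(n:ℝ)) * f (a + ((i:ℝ) + 1/2) * (b - a)/n)
      = ∑ i ∈ Finset.range n, (S (i+1) - S i) * f ((S i + S (i+1))/2) :=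
    Finset.sum_congr rfl fun i _ => by rw [hmid i, ← hstep i]
  have key : ∀ i ∈ Finset.range n,
      |(n:ℝ)^2 * ((∫ t in S i..S (i+1), f t) - (S (i+1) - S i) * f ((S i + S (i+1))/2))
        - (b - a)^2/24 * ∫ t in S i..S (i+1), f₂ t| ≤ (b - a)^2/6 * ε' * ((b - a)/n) := by
    intro i hi
    have hi' : i < n := Finset.mem_range.1 hi
    have hap : a ≤ S i := hSa i
    have hqb : S (i+1) ≤ b := hSb (i+1) hi'
    have hpq : S i ≤ S (i+1) := hSmono i (i+1) (Nat.le_succ i)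
    have hzero : (n:ℝ)^2 * (S (i+1) - S i)^3 / 24 = (b - a)^2/24 * (S (i+1) - S i) := by
      rw [hstep i]; field_simp
    have hCc : (n:ℝ)^2 * ((S (i+1) - S i)/2)^2/2 + (b - a)^2/24 ≤ (b - a)^2/6 := by
      apply le_of_eq
      rw [hstep i]; field_simp; ring
    have hεi : ∀ t ∈ Icc (S i) (S (i+1)), |f₂ t - f₂ ((S i + S (i+1))/2)| ≤ ε' := by
      intro t ht
      have hta : t ∈ Icc a b := ⟨le_trans hap ht.1, le_trans ht.2 hqb⟩
      have hm1 : S i ≤ (S i + S (i+1))/2 := by linarith [hpq]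
      have hm2 : (S i + S (i+1))/2 ≤ S (i+1) := by linarith [hpq]
      have hma : (S i + S (i+1))/2 ∈ Icc a b := ⟨le_trans hap hm1, le_trans hm2 hqb⟩
      have hdist : dist t ((S i + S (i+1))/2) < δ := by
        rw [Real.dist_eq]
        have h1 : |t - (S i + S (i+1))/2| ≤ S (i+1) - S i := by
          obtain ⟨h2, h3⟩ := ht
          rw [abs_sub_le_iff]
          constructor <;> linarith
        exact lt_of_le_of_lt h1 (by rw [hstep i]; exact hhδ)
      exact (hδ t hta _ hma hdist).le
    have := interval_est (a := a) (b := b) (ν := (n:ℝ)) hap hpq hqb hfc hf1c hf2c hd1 hd2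
      hzero (by positivity) hCc hε'0.le hεi
    calc _ ≤ (b - a)^2/6 * ε' * (S (i+1) - S i) := this
      _ = (b - a)^2/6 * ε' * ((b - a)/n) := by rw [hstep i]
  have hgoal_eq : (n:ℝ)^2 * ((∫ x in a..b, f x)
        - ∑ i ∈ Finset.range n, ((b - a)/(n:ℝ)) * f (a + ((i:ℝ) + 1/2) * (b - a)/n))
        - (b - a)^2/24 * (f₁ b - f₁ a)
      = ∑ i ∈ Finset.range n,
          ((n:ℝ)^2 * ((∫ t in S i..S (i+1), f t) - (S (i+1) - S i) * f ((S i + S (i+1))/2))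
            - (b - a)^2/24 * ∫ t in S i..S (i+1), f₂ t) := by
    rw [← hFTC, ← htel_f, ← htel_f2, hsum_mid]
    simp only [Finset.mul_sum, mul_sub, Finset.sum_sub_distrib]
  rw [Real.dist_eq]
  rw [show ((n:ℝ)^2 * ((∫ x in a..b, f x)
        - ∑ i ∈ Finset.range n, ((b - a)/(n:ℝ)) * f (a + ((i:ℝ) + 1/2) * (b - a)/n))
        - (b - a)^2/24 * (f₁ b - f₁ a)) = _ from hgoal_eq]
  calc |∑ i ∈ Finset.range n,
          ((n:ℝ)^2 * ((∫ t in S i..S (i+1), f t) - (S (i+1) - S i) * f ((S i + S (i+1))/2))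
            - (b - a)^2/24 * ∫ t in S i..S (i+1), f₂ t)|
      ≤ ∑ i ∈ Finset.range n,
          |(n:ℝ)^2 * ((∫ t in S i..S (i+1), f t) - (S (i+1) - S i) * f ((S i + S (i+1))/2))
            - (b - a)^2/24 * ∫ t in S i..S (i+1), f₂ t| := Finset.abs_sum_le_sum_abs _ _
    _ ≤ ∑ _i ∈ Finset.range n, (b - a)^2/6 * ε' * ((b - a)/n) := Finset.sum_le_sum key
    _ = n * ((b - a)^2/6 * ε' * ((b - a)/n)) := by
        rw [Finset.sum_const, Finset.card_range, nsmul_eq_mul]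
    _ = (b - a)^2/6 * (b - a) * ε' := by field_simp
    _ < ε := by
        have h1 : (b - a)^2/6 * (b - a) * ε'
            = ε * ((b - a)^2/6 * (b - a)) / ((b - a)^2/6 * (b - a) + 1) := by
          rw [hε'def]; ring
        rw [h1, div_lt_iff₀ hCba]
        nlinarith [hε]

end MidpointAux
end

section
/- Let V be a real inner product space, M ⊆ V̄ subspaces of V, and R : V → ℝ a norm that is decomposable with respect to (M, V̄^⊥), i.e., R(θ + γ) = R(θ) + R(γ) for all θ ∈ M and γ ∈ V̄^⊥. Then for any θ* ∈ V and any Δ ∈ V, writing Δ = Δ_{V̄} + Δ_{V̄^⊥} for the orthogonal decomposition with respect to V̄, one has R(θ* + Δ) − R(θ*) ≥ R(Δ_{V̄^⊥}) − R(Δ_{V̄}) − 2 R(θ*_{M^⊥}), where θ*_{M^⊥} is the orthogonal projection of θ* onto M^⊥. -/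
open Submodule

/-!
Split `θ* = θ_M + θ_{Mᗮ}` and `Δ = Δ_{V̄} + Δ_{V̄ᗮ}`. Decomposability gives
`R(θ_M + Δ_{V̄ᗮ}) = R(θ_M) + R(Δ_{V̄ᗮ})`, and `θ* + Δ` differs from `θ_M + Δ_{V̄ᗮ}` by
`θ_{Mᗮ} + Δ_{V̄}`, so the reverse triangle inequality bounds `R(θ* + Δ)` from below by
`R(θ_M) + R(Δ_{V̄ᗮ}) - R(θ_{Mᗮ}) - R(Δ_{V̄})`; finally `R(θ*) ≤ R(θ_M) + R(θ_{Mᗮ})`.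
-/

section Decomposable

variable {G : Type*} {R : G → ℝ}

theorem apply_le_apply_add_add_apply [AddGroup G] (hR_tri : ∀ x y, R (x + y) ≤ R x + R y)
    (hR_neg : ∀ x, R (-x) = R x) (x y : G) : R x ≤ R (x + y) + R y := by
  simpa [hR_neg] using hR_tri (x + y) (-y)

theorem sub_sub_two_mul_le_apply_add_sub_of_decomposable [AddCommGroup G]
    (hR_tri : ∀ x y, R (x + y) ≤ R x + R y) (hR_neg : ∀ x, R (-x) = R x)
    {M N : Set G} (hdecomp : ∀ θ ∈ M, ∀ γ ∈ N, R (θ + γ) = R θ + R γ)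
    {a b c d : G} (ha : a ∈ M) (hd : d ∈ N) :
    R d - R c - 2 * R b ≤ R (a + b + (c + d)) - R (a + b) := by
  have hlower : R (a + d) ≤ R (a + b + (c + d)) + R (b + c) := by
    calc R (a + d) ≤ R (a + d + (b + c)) + R (b + c) :=
          apply_le_apply_add_add_apply hR_tri hR_neg _ _
      _ = R (a + b + (c + d)) + R (b + c) := by rw [add_add_add_comm, add_comm d]
  rw [hdecomp a ha d hd] at hlower
  linarith [hR_tri b c, hR_tri a b]

end Decomposable

theorem decomposable_regularizer_deviation_general
    {V : Type*} [NormedAddCommGroup V] [InnerProductSpace ℝ V] [FiniteDimensional ℝ V]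
    (M Vbar : Submodule ℝ V)
    (R : V → ℝ)
    (hR_tri : ∀ x y : V, R (x + y) ≤ R x + R y)
    (hR_neg : ∀ x : V, R (-x) = R x)
    (hdecomp : ∀ θ ∈ M, ∀ γ ∈ Vbarᗮ, R (θ + γ) = R θ + R γ)
    (θs Δ : V) :
    R ((orthogonalProjection Vbarᗮ Δ : V)) - R ((orthogonalProjection Vbar Δ : V))
        - 2 * R ((orthogonalProjection Mᗮ θs : V))
      ≤ R (θs + Δ) - R θs := by
  have hθs : (orthogonalProjection M θs : V) + orthogonalProjection Mᗮ θs = θs :=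
    starProjection_add_starProjection_orthogonal (K := M) θs
  have hΔ : (orthogonalProjection Vbar Δ : V) + orthogonalProjection Vbarᗮ Δ = Δ :=
    starProjection_add_starProjection_orthogonal (K := Vbar) Δ
  have h := sub_sub_two_mul_le_apply_add_sub_of_decomposable hR_tri hR_neg hdecomp
    (orthogonalProjection M θs).2 (orthogonalProjection Vbarᗮ Δ).2
    (b := orthogonalProjection Mᗮ θs) (c := orthogonalProjection Vbar Δ)
  rwa [hθs, hΔ] at h

/-- Deviation inequality for decomposable regularizers: if the norm `R` is decomposable
with respect to `(M, V̄ᗮ)`, then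
`R(θ* + Δ) − R(θ*) ≥ R(Δ_{V̄ᗮ}) − R(Δ_{V̄}) − 2 R(θ*_{Mᗮ})`. -/
theorem decomposable_regularizer_deviation
    {V : Type*} [NormedAddCommGroup V] [InnerProductSpace ℝ V] [FiniteDimensional ℝ V]
    (M Vbar : Submodule ℝ V) (hMV : M ≤ Vbar)
    (R : V → ℝ)
    (hR_tri : ∀ x y : V, R (x + y) ≤ R x + R y)
    (hR_neg : ∀ x : V, R (-x) = R x)
    (hdecomp : ∀ θ ∈ M, ∀ γ ∈ Vbarᗮ, R (θ + γ) = R θ + R γ)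
    (θs Δ : V) :
    R ((orthogonalProjection Vbarᗮ Δ : V)) - R ((orthogonalProjection Vbar Δ : V))
        - 2 * R ((orthogonalProjection Mᗮ θs : V))
      ≤ R (θs + Δ) - R θs :=
  decomposable_regularizer_deviation_general M Vbar R hR_tri hR_neg hdecomp θs Δ
end

section
/- Let A = (a_ij) ∈ ℝ^{m×n} with m ≥ n. For i = 1,…,n define r_i = Σ_{j≠i, j≤n} |a_ij|, c_i = Σ_{j≠i, j≤m} |a_ji|, s_i = max(r_i, c_i), a_i = |a_ii|, and s = max_{n+1≤i≤m} Σ_{j=1}^n |a_ij| (with s = 0 if m = n). Then every singular value of A lies in one of the real intervals B_i = [max(a_i − s_i, 0), a_i + s_i] for i = 1,…,n, or in B_{n+1} = [0, s]. -/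
/-!
Let `σ > 0` be a singular value, so that `A v = σ u` and `Aᵀ u = σ v` for some `v ≠ 0`. Pick the
entry of largest modulus among all coordinates of `u` and `v`, say `M`. If it is a coordinate
`v_i` or `u_i` of a "diagonal" pair `(u_i, v_i)`, the `i`-th equations of `A v = σ u` and
`Aᵀ u = σ v`, with every off-diagonal term bounded by `|a_ij| M`, give
`|σ u_i - a_ii v_i| ≤ r_i M` and `|σ v_i - a_ii u_i| ≤ c_i M`, which pin `σ` to within `s_i` of
`|a_ii|`. If it is a coordinate `u_i` with `i > n`, the row `i` of `A v = σ u` gives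
`σ M ≤ (∑_j |a_ij|) M`.
-/

open Matrix Finset

/-- Singular values: square roots of the eigenvalues of `Aᵀ A`. -/
noncomputable def singularValues {m n : ℕ} (A : Matrix (Fin m) (Fin n) ℝ) : Fin n → ℝ :=
  fun i => Real.sqrt ((show (Aᵀ * A).IsHermitian by
    simpa using Matrix.isHermitian_conjTranspose_mul_self A).eigenvalues i)

lemma abs_sum_mul_le_sum_abs_mul {α : Type*} (t : Finset α) (f g : α → ℝ) {M : ℝ}
    (hg : ∀ j ∈ t, |g j| ≤ M) : |∑ j ∈ t, f j * g j| ≤ (∑ j ∈ t, |f j|) * M :=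
  calc |∑ j ∈ t, f j * g j| ≤ ∑ j ∈ t, |f j * g j| := abs_sum_le_sum_abs _ _
    _ ≤ ∑ j ∈ t, |f j| * M := sum_le_sum fun j hj => by
        rw [abs_mul]; exact mul_le_mul_of_nonneg_left (hg j hj) (abs_nonneg _)
    _ = (∑ j ∈ t, |f j|) * M := (sum_mul _ _ _).symm

lemma mem_Icc_of_abs_mul_sub_mul_le {σ a s x y : ℝ} (hσ : 0 ≤ σ) (hx : 0 < |x|) (hy : |y| ≤ |x|)
    (hxy : |σ * x - a * y| ≤ s * |x|) (hyx : |σ * y - a * x| ≤ s * |x|) :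
    σ ∈ Set.Icc (max (|a| - s) 0) (|a| + s) := by
  have hσy : |σ * y| ≤ σ * |x| := by
    rw [abs_mul, abs_of_nonneg hσ]; exact mul_le_mul_of_nonneg_left hy hσ
  have lower : |a| * |x| ≤ σ * |x| + s * |x| :=
    calc |a| * |x| = |σ * y - (σ * y - a * x)| := by rw [← abs_mul]; congr 1; ring
      _ ≤ |σ * y| + |σ * y - a * x| := abs_sub _ _
      _ ≤ σ * |x| + s * |x| := add_le_add hσy hyx
  have upper : σ * |x| ≤ |a| * |x| + s * |x| :=
    calc σ * |x| = |a * y + (σ * x - a * y)| := by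
          rw [← abs_of_nonneg hσ, ← abs_mul, abs_of_nonneg hσ]; congr 1; ring
      _ ≤ |a * y| + |σ * x - a * y| := abs_add_le _ _
      _ ≤ |a| * |x| + s * |x| := by
          rw [abs_mul]; exact add_le_add (mul_le_mul_of_nonneg_left hy (abs_nonneg a)) hxy
  exact ⟨max_le (by nlinarith) hσ, by nlinarith⟩

section Localization

variable {ι κ : Type*} [Fintype κ]

lemma abs_mulVec_apply_le (A : Matrix ι κ ℝ) {v : κ → ℝ} {M : ℝ} (hv : ∀ l, |v l| ≤ M) (i : ι) :
    |(A *ᵥ v) i| ≤ (∑ l, |A i l|) * M :=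
  abs_sum_mul_le_sum_abs_mul _ _ _ fun l _ => hv l

lemma abs_mulVec_apply_sub_le [DecidableEq κ] (A : Matrix ι κ ℝ) {v : κ → ℝ} {M : ℝ}
    (hv : ∀ l, |v l| ≤ M) (i : ι) (j : κ) :
    |(A *ᵥ v) i - A i j * v j| ≤ (∑ l ∈ univ.erase j, |A i l|) * M := by
  have hsplit : (A *ᵥ v) i - A i j * v j = ∑ l ∈ univ.erase j, A i l * v l := by
    rw [mulVec, dotProduct, ← add_sum_erase _ _ (mem_univ j), add_sub_cancel_left]
  rw [hsplit]
  exact abs_sum_mul_le_sum_abs_mul _ _ _ fun l _ => hv l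

/-- `d j` is the row holding the diagonal entry of column `j`. -/
lemma singular_pair_localization [Fintype ι] [DecidableEq ι] [DecidableEq κ] (A : Matrix ι κ ℝ) (d : κ → ι)
    {σ : ℝ} {u : ι → ℝ} {v : κ → ℝ} (hσ : 0 ≤ σ) (hv : v ≠ 0)
    (hAv : A *ᵥ v = σ • u) (hAu : Aᵀ *ᵥ u = σ • v) :
    (∃ j, σ ∈ Set.Icc
        (max (|A (d j) j| -
          max (∑ l ∈ univ.erase j, |A (d j) l|) (∑ l ∈ univ.erase (d j), |A l j|)) 0)
        (|A (d j) j| +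
          max (∑ l ∈ univ.erase j, |A (d j) l|) (∑ l ∈ univ.erase (d j), |A l j|))) ∨
      ∃ i, (∀ j, d j ≠ i) ∧ σ ≤ ∑ l, |A i l| := by
  obtain ⟨j₀, hj₀⟩ := Function.ne_iff.mp hv
  obtain ⟨p, -, hp⟩ := exists_max_image univ (Sum.elim (fun i => |u i|) (fun j => |v j|))
    ⟨Sum.inr j₀, mem_univ _⟩
  set M := Sum.elim (fun i => |u i|) (fun j => |v j|) p
  have hu_le : ∀ i, |u i| ≤ M := fun i => hp (Sum.inl i) (mem_univ _)
  have hv_le : ∀ j, |v j| ≤ M := fun j => hp (Sum.inr j) (mem_univ _)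
  have hM : 0 < M := (abs_pos.mpr hj₀).trans_le (hv_le j₀)
  have row_bound : ∀ j, |σ * u (d j) - A (d j) j * v j| ≤
      max (∑ l ∈ univ.erase j, |A (d j) l|) (∑ l ∈ univ.erase (d j), |A l j|) * M := fun j => by
    have h := abs_mulVec_apply_sub_le A hv_le (d j) j
    rw [hAv, Pi.smul_apply, smul_eq_mul] at h
    exact h.trans (mul_le_mul_of_nonneg_right (le_max_left _ _) hM.le)
  have col_bound : ∀ j, |σ * v j - A (d j) j * u (d j)| ≤
      max (∑ l ∈ univ.erase j, |A (d j) l|) (∑ l ∈ univ.erase (d j), |A l j|) * M := fun j => by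
    have h := abs_mulVec_apply_sub_le Aᵀ hu_le j (d j)
    rw [hAu, Pi.smul_apply, smul_eq_mul] at h
    exact h.trans (mul_le_mul_of_nonneg_right (le_max_right _ _) hM.le)
  rcases p with i | j
  · by_cases hi : ∃ j, d j = i
    · obtain ⟨j, rfl⟩ := hi
      exact Or.inl ⟨j, mem_Icc_of_abs_mul_sub_mul_le hσ hM (hv_le j) (row_bound j) (col_bound j)⟩
    · refine Or.inr ⟨i, not_exists.mp hi, le_of_mul_le_mul_right ?_ hM⟩
      have h := abs_mulVec_apply_le A hv_le i
      rwa [hAv, Pi.smul_apply, smul_eq_mul, abs_mul, abs_of_nonneg hσ] at h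
  · exact Or.inl ⟨j, mem_Icc_of_abs_mul_sub_mul_le hσ hM (hu_le (d j)) (col_bound j) (row_bound j)⟩

end Localization

lemma exists_singular_pair {m n : ℕ} (A : Matrix (Fin m) (Fin n) ℝ) (k : Fin n)
    (hσ : singularValues A k ≠ 0) :
    ∃ (u : Fin m → ℝ) (v : Fin n → ℝ), v ≠ 0 ∧
      A *ᵥ v = singularValues A k • u ∧ Aᵀ *ᵥ u = singularValues A k • v := by
  have hA : (Aᵀ * A).IsHermitian := by simpa using isHermitian_conjTranspose_mul_self A
  set σ := singularValues A k
  have hσσ : σ * σ = hA.eigenvalues k :=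
    Real.mul_self_sqrt (eigenvalues_conjTranspose_mul_self_nonneg A k)
  set v := (hA.eigenvectorBasis k).ofLp
  refine ⟨σ⁻¹ • A *ᵥ v, v, ?_, by rw [smul_inv_smul₀ hσ], ?_⟩
  · exact fun h => hA.eigenvectorBasis.orthonormal.ne_zero k (WithLp.ofLp_injective 2 h)
  · rw [mulVec_smul, mulVec_mulVec, hA.mulVec_eigenvectorBasis, ← hσσ, mul_smul,
      inv_smul_smul₀ hσ]

/-- Gershgorin-type localization of singular values (Qi, 1984): every singular value
of `A ∈ ℝ^{m×n}` (`m ≥ n`) lies in one of the intervals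
`B_i = [max(a_i − s_i, 0), a_i + s_i]`, `i = 1,…,n`, or in `B_{n+1} = [0, s]`. -/
theorem singularValues_gershgorin {m n : ℕ} (hnm : n ≤ m)
    (A : Matrix (Fin m) (Fin n) ℝ) :
    ∀ k : Fin n,
      (∃ i : Fin n,
        singularValues A k ∈
          Set.Icc
            (max (|A (Fin.castLE hnm i) i| -
              max (∑ j ∈ Finset.univ.erase i, |A (Fin.castLE hnm i) j|)
                  (∑ j ∈ Finset.univ.erase (Fin.castLE hnm i), |A j i|)) 0)
            (|A (Fin.castLE hnm i) i| +
              max (∑ j ∈ Finset.univ.erase i, |A (Fin.castLE hnm i) j|)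
                  (∑ j ∈ Finset.univ.erase (Fin.castLE hnm i), |A j i|))) ∨
      singularValues A k ∈
        Set.Icc (0 : ℝ)
          ((Finset.univ.filter fun i : Fin m => n ≤ (i : ℕ)).fold max 0
            fun i => ∑ j, |A i j|) := by
  intro k
  have hσ : 0 ≤ singularValues A k := Real.sqrt_nonneg _
  by_cases hσ0 : singularValues A k = 0
  · exact Or.inr ⟨hσ, hσ0 ▸ (le_fold_max _).mpr (Or.inl le_rfl)⟩
  obtain ⟨u, v, hv, hAv, hAu⟩ := exists_singular_pair A k hσ0
  rcases singular_pair_localization A (Fin.castLE hnm) hσ hv hAv hAu with h | ⟨i, hi, hrow⟩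
  · exact Or.inl h
  · have hni : n ≤ (i : ℕ) := by
      by_contra! h
      exact hi ⟨i, h⟩ rfl
    exact Or.inr ⟨hσ, (le_fold_max _).mpr (Or.inr ⟨i, mem_filter.mpr ⟨mem_univ _, hni⟩, hrow⟩)⟩
end
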